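/- arXiv:1506.05275 — 3 statements merged into one kernel-verified Lean document; each statement's English description precedes it below -/
import Mathlib

section
/- If b ∈ Θ, i.e. G(X,c,b)·E(H(Y,c)|X) ≥ 0 almost surely for all c ∈ C, then for every γ ∈ Γ and c ∈ C, G(X,c,b)·E(H(Y,c)|G(X,c,b),G(X,c,γ)) ≥ 0 almost surely, using the tower property: E(H(Y,c)|G(X,c,b),G(X,c,γ)) = E(E(H(Y,c)|X)|G(X,c,b),G(X,c,γ)) since G(X,c,b) and G(X,c,γ) are measurable functions of X. -/
open MeasureTheory ProbabilityTheory

/-!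
Since `G(X,c,b)` and `G(X,c,γ)` are functions of `X`, the tower property gives
`E(H | G(X,c,b), G(X,c,γ)) = E(E(H | X) | G(X,c,b), G(X,c,γ))`. Conditioning on a σ-algebra `m`
preserves the sign of an integrand on any `m`-measurable set where that sign is constant, and
`{G(X,c,b) > 0}`, `{G(X,c,b) < 0}` are such sets; on `{G(X,c,b) = 0}` the product vanishes.
-/

/-- Conditional expectation of `f` given the σ-algebra generated by the random element `X`. -/
noncomputable def condExpGiven {Ω 𝓧 : Type*} [MeasurableSpace Ω] [MeasurableSpace 𝓧]
    (μ : Measure Ω) (X : Ω → 𝓧) (f : Ω → ℝ) : Ω → ℝ :=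
  μ[f | MeasurableSpace.comap X inferInstance]

section CondExpSign

variable {Ω : Type*} {m m₀ : MeasurableSpace Ω} {μ : Measure Ω} {g : Ω → ℝ} {s : Set Ω}

theorem ae_condExp_nonneg_on (hs : MeasurableSet[m] s) (hg : Integrable g μ)
    (h : ∀ᵐ ω ∂μ, ω ∈ s → 0 ≤ g ω) : ∀ᵐ ω ∂μ, ω ∈ s → 0 ≤ μ[g | m] ω := by
  have hind : 0 ≤ᵐ[μ] s.indicator g := by
    filter_upwards [h] with ω hω
    by_cases hωs : ω ∈ s
    · simpa [Set.indicator_of_mem hωs] using hω hωs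
    · simp [Set.indicator_of_notMem hωs]
  filter_upwards [(condExp_nonneg hind).trans (condExp_indicator hg hs).le] with ω hω hωs
  simpa [Set.indicator_of_mem hωs] using hω

theorem ae_condExp_nonpos_on (hs : MeasurableSet[m] s) (hg : Integrable g μ)
    (h : ∀ᵐ ω ∂μ, ω ∈ s → g ω ≤ 0) : ∀ᵐ ω ∂μ, ω ∈ s → μ[g | m] ω ≤ 0 := by
  have hneg := ae_condExp_nonneg_on (m := m) hs hg.neg
    (by filter_upwards [h] with ω hω hωs using neg_nonneg.mpr (hω hωs))
  filter_upwards [hneg, condExp_neg g m] with ω hω hneg_eq hωs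
  simpa [hneg_eq] using hω hωs

theorem ae_mul_condExp_nonneg {φ : Ω → ℝ} (hφ : Measurable[m] φ) (hg : Integrable g μ)
    (h : ∀ᵐ ω ∂μ, 0 ≤ φ ω * g ω) : ∀ᵐ ω ∂μ, 0 ≤ φ ω * μ[g | m] ω := by
  have hpos := ae_condExp_nonneg_on (hφ measurableSet_Ioi) hg
    (by filter_upwards [h] with ω hω hφω using nonneg_of_mul_nonneg_right hω hφω)
  have hneg := ae_condExp_nonpos_on (hφ measurableSet_Iio) hg
    (by filter_upwards [h] with ω hω hφω using nonpos_of_mul_nonneg_right hω hφω)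
  filter_upwards [hpos, hneg] with ω hpos hneg
  rcases lt_trichotomy (φ ω) 0 with hφω | hφω | hφω
  · exact mul_nonneg_of_nonpos_of_nonpos hφω.le (hneg hφω)
  · simp [hφω]
  · exact mul_nonneg hφω.le (hpos hφω)

end CondExpSign

theorem theta_subset_theta_tilde_general {Ω 𝓧 𝓨 P C' : Type*}
    [MeasurableSpace Ω] [MeasurableSpace 𝓧] [MeasurableSpace 𝓨]
    (μ : Measure Ω) [IsProbabilityMeasure μ]
    (X : Ω → 𝓧) (Y : Ω → 𝓨) (hX : Measurable X)
    (Γ : Set P) (C : Set C')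
    (G : 𝓧 → C' → P → ℝ) (H : 𝓨 → C' → ℝ)
    (hG : ∀ c b, Measurable fun x => G x c b)
    (b : P)
    -- b ∈ Θ
    (hbTheta : ∀ c ∈ C, ∀ᵐ ω ∂μ,
      G (X ω) c b * condExpGiven μ X (fun ω' => H (Y ω') c) ω ≥ 0)
    -- the indexing variables are measurable functions of X (tower property applies)
    : ∀ γ ∈ Γ, ∀ c ∈ C,
      (∀ᵐ ω ∂μ,
        G (X ω) c b *
          condExpGiven μ (fun ω' => (G (X ω') c b, G (X ω') c γ))
            (fun ω' => H (Y ω') c) ω ≥ 0) ∧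
      (condExpGiven μ (fun ω' => (G (X ω') c b, G (X ω') c γ))
          (fun ω' => H (Y ω') c) =ᵐ[μ]
        condExpGiven μ (fun ω' => (G (X ω') c b, G (X ω') c γ))
          (condExpGiven μ X (fun ω' => H (Y ω') c))) := by
  intro γ _ c hc
  set π : Ω → ℝ × ℝ := fun ω => (G (X ω) c b, G (X ω) c γ)
  have hπX : MeasurableSpace.comap π inferInstance ≤ MeasurableSpace.comap X inferInstance :=
    (((hG c b).prodMk (hG c γ)).comp (comap_measurable X)).comap_le
  have htower := condExp_condExp_of_le (μ := μ) (f := fun ω => H (Y ω) c) hπX hX.comap_le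
  refine ⟨?_, htower.symm⟩
  have hGπ : Measurable[MeasurableSpace.comap π inferInstance] fun ω => G (X ω) c b :=
    measurable_fst.comp (comap_measurable π)
  filter_upwards [htower, ae_mul_condExp_nonneg hGπ integrable_condExp (hbTheta c hc)]
    with ω htower_ω hnonneg
  simpa only [condExpGiven, ← htower_ω] using hnonneg

/-- If `b ∈ Θ`, i.e. `G(X,c,b)·E(H(Y,c)|X) ≥ 0` a.s. for all `c ∈ C`, then for
every `γ ∈ Γ` and `c ∈ C`, `G(X,c,b)·E(H(Y,c)|G(X,c,b),G(X,c,γ)) ≥ 0` a.s. -/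
theorem theta_subset_theta_tilde {Ω 𝓧 𝓨 P C' : Type*}
    [MeasurableSpace Ω] [MeasurableSpace 𝓧] [MeasurableSpace 𝓨]
    (μ : Measure Ω) [IsProbabilityMeasure μ]
    (X : Ω → 𝓧) (Y : Ω → 𝓨) (hX : Measurable X) (hY : Measurable Y)
    (Γ : Set P) (C : Set C') (β : P) (hβ : β ∈ Γ)
    (G : 𝓧 → C' → P → ℝ) (H : 𝓨 → C' → ℝ)
    (hG : ∀ c b, Measurable fun x => G x c b)
    (hH : ∀ c, Measurable fun y => H y c)
    (hHint : ∀ c, Integrable (fun ω => H (Y ω) c) μ)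
    -- Assumption 2 (continuity)
    (hcont : ∀ b ∈ Γ, ∀ c ∈ C, μ {ω | G (X ω) c b = 0} = 0)
    (b : P) (hb : b ∈ Γ)
    -- b ∈ Θ
    (hbTheta : ∀ c ∈ C, ∀ᵐ ω ∂μ,
      G (X ω) c b * condExpGiven μ X (fun ω' => H (Y ω') c) ω ≥ 0)
    -- the indexing variables are measurable functions of X (tower property applies)
    : ∀ γ ∈ Γ, ∀ c ∈ C,
      (∀ᵐ ω ∂μ,
        G (X ω) c b *
          condExpGiven μ (fun ω' => (G (X ω') c b, G (X ω') c γ))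
            (fun ω' => H (Y ω') c) ω ≥ 0) ∧
      (condExpGiven μ (fun ω' => (G (X ω') c b, G (X ω') c γ))
          (fun ω' => H (Y ω') c) =ᵐ[μ]
        condExpGiven μ (fun ω' => (G (X ω') c b, G (X ω') c γ))
          (condExpGiven μ X (fun ω' => H (Y ω') c))) :=
  theta_subset_theta_tilde_general μ X Y hX Γ C G H hG b hbTheta
end

section
/- In the three-covariate counterexample, b̃ = (1,0,1) belongs to Θ (X'b̃ and X'β have the same sign almost surely) but b̃ ∉ Θ̲: taking γ = (1,0,0), the event {X'b̃ < 0 and X₁ > 0} has positive probability while P(Y=1|X₁ = s) ≥ τ for all s ≥ 0, so X'b̃·[P(Y=1|X'γ) − τ] < 0 with positive probability. Hence Θ̲ can be a proper subset of Θ. -/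
open MeasureTheory ProbabilityTheory Set

/-- The uniform probability measure on the interval `(a, b)`. -/
noncomputable def uniformOnIoo (a b : ℝ) : Measure ℝ :=
  (ENNReal.ofReal (b - a))⁻¹ • (volume.restrict (Ioo a b))

/-!
Given `X₁ = s`, the outcome is `Y = 1` exactly when `ξ ≤ (s + X₂) / √(1 + X₂²)`, so by
independence `P(Y = 1 | X₁ = s) = E[F_ξ((s + X₂) / √(1 + X₂²))]`. Since `X₂` and `-X₂` have the
same law, this is the average of `F_ξ(a) + F_ξ(b)` with `a = (s + X₂)/w`, `b = (s - X₂)/w`,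
`w = √(1 + X₂²) ∈ [1, 2]`; both exceed `-1`, and `F_ξ(t) ≥ τ + c·min t 1` there, while
`min a 1 + min b 1 ≥ s` because `a + b = 2s/w ≥ s`. Hence `P(Y = 1 | X₁ = s) ≥ τ + cs/2` for
`0 ≤ s < 1`. On the event `X₁ ∈ (0, 1/2)`, `X₂ ∈ (-1, -1/2)`, of positive probability, we have
`X₁ + X₂ < 0`, so `X₃ = T₂ < -1` and `X₁ + X₃ < 0`, while `P(Y = 1 | X₁) - τ > 0` there.
-/

section Uniform

variable {a b : ℝ}

lemma uniformOnIoo_apply (s : Set ℝ) :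
    uniformOnIoo a b s = (ENNReal.ofReal (b - a))⁻¹ * volume (s ∩ Ioo a b) := by
  rw [uniformOnIoo, Measure.smul_apply, Measure.restrict_apply' measurableSet_Ioo, smul_eq_mul]

lemma isProbabilityMeasure_uniformOnIoo (hab : a < b) :
    IsProbabilityMeasure (uniformOnIoo a b) := by
  constructor
  rw [uniformOnIoo_apply, univ_inter, Real.volume_Ioo]
  exact ENNReal.inv_mul_cancel (by simpa using hab) ENNReal.ofReal_ne_top

instance : IsProbabilityMeasure (uniformOnIoo (-1) 1) :=
  isProbabilityMeasure_uniformOnIoo (by norm_num)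

lemma uniformOnIoo_Ioo_pos {u v : ℝ} (hau : a ≤ u) (huv : u < v) (hvb : v ≤ b) :
    0 < uniformOnIoo a b (Ioo u v) := by
  rw [uniformOnIoo_apply, inter_eq_self_of_subset_left (Ioo_subset_Ioo hau hvb), Real.volume_Ioo]
  exact ENNReal.mul_pos (ENNReal.inv_ne_zero.2 ENNReal.ofReal_ne_top) (by simpa using huv)

lemma ae_mem_Ioo_uniformOnIoo : ∀ᵐ x ∂(uniformOnIoo a b), x ∈ Ioo a b := by
  rw [ae_iff, ← compl_def, uniformOnIoo_apply, compl_inter_self, measure_empty, mul_zero]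

lemma ae_mem_Ioo_of_map_eq_uniformOnIoo {Ω : Type*} [MeasurableSpace Ω] {μ : Measure Ω}
    {X : Ω → ℝ} (hX : Measurable X) (h : μ.map X = uniformOnIoo a b) :
    ∀ᵐ ω ∂μ, X ω ∈ Ioo a b :=
  ae_of_ae_map hX.aemeasurable (h ▸ ae_mem_Ioo_uniformOnIoo)

lemma map_neg_uniformOnIoo : (uniformOnIoo a b).map Neg.neg = uniformOnIoo (-b) (-a) := by
  have hpre : Ioo a b = Neg.neg ⁻¹' Ioo (-b) (-a) := by simp
  rw [uniformOnIoo, Measure.map_smul, hpre, ← measurableEmbedding_neg.restrict_map,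
    Measure.map_neg_eq_self, uniformOnIoo, neg_sub_neg]

end Uniform

theorem ProbabilityTheory.IndepFun.condExp_comp_prodMk_ae_eq {Ω β γ F : Type*}
    {mΩ : MeasurableSpace Ω} {mβ : MeasurableSpace β} [MeasurableSpace γ] [StandardBorelSpace γ]
    [Nonempty γ] [NormedAddCommGroup F] [NormedSpace ℝ F] [CompleteSpace F]
    {μ : Measure Ω} [IsFiniteMeasure μ] {X : Ω → β} {Z : Ω → γ} (hXZ : IndepFun X Z μ)
    (hX : Measurable X) (hZ : Measurable Z) {f : β × γ → F} (hf : StronglyMeasurable f)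
    (hfi : Integrable (fun ω => f (X ω, Z ω)) μ) :
    μ[fun ω => f (X ω, Z ω) | mβ.comap X] =ᵐ[μ] fun ω => ∫ z, f (X ω, z) ∂(μ.map Z) := by
  have hκ : condDistrib Z X μ =ᵐ[μ.map X] Kernel.const β (μ.map Z) := by
    refine condDistrib_ae_eq_of_measure_eq_compProd X hZ.aemeasurable ?_
    rw [Measure.compProd_const]
    exact (indepFun_iff_map_prod_eq_prod_map_map hX.aemeasurable hZ.aemeasurable).1 hXZ
  filter_upwards [condExp_prod_ae_eq_integral_condDistrib hX hZ.aemeasurable hf hfi,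
    ae_of_ae_map hX.aemeasurable hκ] with ω h hω
  rw [h, hω, Kernel.const_apply]

noncomputable def normalizedIndex (s x : ℝ) : ℝ := (s + x) / √(1 + x ^ 2)

noncomputable def response (s x u : ℝ) : ℝ := if √(1 + x ^ 2) * u ≤ s + x then 1 else 0

/-- `P(Y = 1 | X₁ = s)` when `X₂` is uniform on `(-1, 1)` and `ξ` has law `ρ`, both independent
of `X₁`. -/
noncomputable def responseProb (ρ : Measure ℝ) (s : ℝ) : ℝ :=
  ∫ x, cdf ρ (normalizedIndex s x) ∂(uniformOnIoo (-1) 1)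

lemma one_le_sqrt_one_add_sq (x : ℝ) : 1 ≤ √(1 + x ^ 2) :=
  Real.one_le_sqrt.2 (by nlinarith)

lemma response_eq_indicator (s x u : ℝ) :
    response s x u = (Iic (normalizedIndex s x)).indicator 1 u := by
  have hw : 0 < √(1 + x ^ 2) := one_pos.trans_le (one_le_sqrt_one_add_sq x)
  simp only [response, indicator, mem_Iic, normalizedIndex, le_div_iff₀ hw, mul_comm u,
    Pi.one_apply]

lemma measurable_response : Measurable (fun p : ℝ × ℝ × ℝ => response p.1 p.2.1 p.2.2) := by
  unfold response
  exact Measurable.ite (measurableSet_le (by fun_prop) (by fun_prop)) measurable_const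
    measurable_const

lemma norm_response_le_one (s x u : ℝ) : ‖response s x u‖ ≤ 1 := by
  unfold response; split_ifs <;> simp

lemma integral_response {ρ : Measure ℝ} [IsProbabilityMeasure ρ] (s x : ℝ) :
    ∫ u, response s x u ∂ρ = cdf ρ (normalizedIndex s x) := by
  simp_rw [response_eq_indicator, integral_indicator_one measurableSet_Iic, cdf_eq_real]

lemma integral_response_prod {ν ρ : Measure ℝ} [IsFiniteMeasure ν] [IsProbabilityMeasure ρ]
    (s : ℝ) : ∫ z, response s z.1 z.2 ∂(ν.prod ρ) = ∫ x, cdf ρ (normalizedIndex s x) ∂ν := by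
  have hint : Integrable (fun z : ℝ × ℝ => response s z.1 z.2) (ν.prod ρ) :=
    .of_bound (measurable_response.comp measurable_prodMk_left).aestronglyMeasurable 1
      (.of_forall fun z => norm_response_le_one s z.1 z.2)
  simp_rw [integral_prod _ hint, integral_response]

lemma condExpGiven_response_ae_eq {Ω : Type*} [MeasurableSpace Ω] {μ : Measure Ω}
    [IsProbabilityMeasure μ] {X₁ X₂ ξ : Ω → ℝ} (hX₁ : Measurable X₁) (hX₂ : Measurable X₂)
    (hξ : Measurable ξ) (h₁ : IndepFun X₁ (fun ω => (X₂ ω, ξ ω)) μ) (h₂ : IndepFun X₂ ξ μ)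
    (hlaw₂ : μ.map X₂ = uniformOnIoo (-1) 1) :
    condExpGiven μ X₁ (fun ω => response (X₁ ω) (X₂ ω) (ξ ω)) =ᵐ[μ]
      fun ω => responseProb (μ.map ξ) (X₁ ω) := by
  have : IsProbabilityMeasure (μ.map ξ) := Measure.isProbabilityMeasure_map hξ.aemeasurable
  have hlaw : μ.map (fun ω => (X₂ ω, ξ ω)) = (uniformOnIoo (-1) 1).prod (μ.map ξ) := by
    rw [← hlaw₂]
    exact (indepFun_iff_map_prod_eq_prod_map_map hX₂.aemeasurable hξ.aemeasurable).1 h₂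
  have hint : Integrable (fun ω => response (X₁ ω) (X₂ ω) (ξ ω)) μ :=
    .of_bound (measurable_response.comp (hX₁.prodMk (hX₂.prodMk hξ))).aestronglyMeasurable 1
      (.of_forall fun ω => norm_response_le_one _ _ _)
  filter_upwards [h₁.condExp_comp_prodMk_ae_eq hX₁ (hX₂.prodMk hξ)
    measurable_response.stronglyMeasurable hint] with ω hω
  rw [condExpGiven, hω, hlaw, integral_response_prod, responseProb]

lemma integrable_cdf_comp {ν : Measure ℝ} [IsFiniteMeasure ν] (ρ : Measure ℝ) {φ : ℝ → ℝ}
    (hφ : Measurable φ) : Integrable (fun x => cdf ρ (φ x)) ν :=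
  .of_bound ((cdf ρ).mono.measurable.comp hφ).aestronglyMeasurable 1 (.of_forall fun x => by
    rw [Real.norm_of_nonneg (cdf_nonneg ρ _)]; exact cdf_le_one ρ _)

lemma add_mul_min_le_cdf {ρ : Measure ℝ} {τ c t : ℝ}
    (hF : ∀ t ∈ Ioc (-1 : ℝ) 1, cdf ρ t = τ + c * t) (ht : -1 < t) :
    τ + c * min t 1 ≤ cdf ρ t := by
  rcases le_total t 1 with h | h
  · rw [min_eq_left h, hF t ⟨ht, h⟩]
  · rw [min_eq_right h, ← hF 1 ⟨by norm_num, le_rfl⟩]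
    exact (cdf ρ).mono h

lemma neg_one_lt_normalizedIndex {s x : ℝ} (hs : 0 ≤ s) (hx : -1 < x) :
    -1 < normalizedIndex s x := by
  have hw := one_le_sqrt_one_add_sq x
  rw [normalizedIndex, lt_div_iff₀ (by linarith)]
  linarith

lemma le_min_normalizedIndex_add_min {s x : ℝ} (hs₀ : 0 ≤ s) (hs₁ : s < 1)
    (hx : x ∈ Ioo (-1) 1) :
    s ≤ min (normalizedIndex s x) 1 + min (normalizedIndex s (-x)) 1 := by
  set w := √(1 + x ^ 2)
  have hw₁ : 1 ≤ w := one_le_sqrt_one_add_sq x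
  have hw₂ : w ≤ 2 := by
    rw [Real.sqrt_le_left (by norm_num)]
    nlinarith [hx.1, hx.2]
  have hw₀ : 0 < w := by linarith
  have hsum : s ≤ normalizedIndex s x + normalizedIndex s (-x) := by
    rw [normalizedIndex, normalizedIndex, neg_sq, ← add_div, le_div_iff₀ hw₀]
    nlinarith
  have hplus : s - 1 ≤ normalizedIndex s x := by
    rw [normalizedIndex, le_div_iff₀ hw₀]; nlinarith [hx.1]
  have hminus : s - 1 ≤ normalizedIndex s (-x) := by
    rw [normalizedIndex, neg_sq, le_div_iff₀ hw₀]; nlinarith [hx.2]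
  rcases min_cases (normalizedIndex s x) 1 with ⟨h, -⟩ | ⟨h, -⟩ <;>
    rcases min_cases (normalizedIndex s (-x)) 1 with ⟨h', -⟩ | ⟨h', -⟩ <;> linarith

lemma le_responseProb {ρ : Measure ℝ} [IsProbabilityMeasure ρ] {τ c s : ℝ} (hc : 0 ≤ c)
    (hF : ∀ t ∈ Ioc (-1 : ℝ) 1, cdf ρ t = τ + c * t) (hs₀ : 0 ≤ s) (hs₁ : s < 1) :
    τ + c * s / 2 ≤ responseProb ρ s := by
  set ν := uniformOnIoo (-1) 1
  have hmeas : Measurable (normalizedIndex s) := by unfold normalizedIndex; fun_prop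
  have hint := integrable_cdf_comp (ν := ν) ρ hmeas
  have hint' : Integrable (fun x => cdf ρ (normalizedIndex s (-x))) ν :=
    integrable_cdf_comp ρ (hmeas.comp measurable_neg)
  have hν : ν.map Neg.neg = ν := by rw [map_neg_uniformOnIoo, neg_neg]
  have hsymm : ∫ x, cdf ρ (normalizedIndex s (-x)) ∂ν = responseProb ρ s := by
    have h := integral_map (f := fun x => cdf ρ (normalizedIndex s x)) (μ := ν)
      measurable_neg.aemeasurable (by rw [hν]; exact hint.1)
    rw [hν] at h
    exact h.symm
  have hpair : ∫ _x, (2 * τ + c * s) ∂ν ≤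
      ∫ x, (cdf ρ (normalizedIndex s x) + cdf ρ (normalizedIndex s (-x))) ∂ν := by
    refine integral_mono_ae (integrable_const _) (hint.add hint') ?_
    filter_upwards [ae_mem_Ioo_uniformOnIoo] with x hx
    have h := le_min_normalizedIndex_add_min hs₀ hs₁ hx
    have hplus := add_mul_min_le_cdf hF (neg_one_lt_normalizedIndex hs₀ hx.1)
    have hminus := add_mul_min_le_cdf hF (neg_one_lt_normalizedIndex hs₀ (neg_lt_neg hx.2))
    nlinarith
  rw [integral_add hint hint', hsymm, integral_const, probReal_univ, one_smul] at hpair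
  rw [responseProb] at hpair ⊢
  linarith

lemma add_ite_mul_nonneg {x₁ x₂ t₁ t₂ : ℝ} (hx₁ : x₁ ∈ Ioo (-1) 1) (ht₁ : 1 < t₁)
    (ht₂ : t₂ < -1) : 0 ≤ (x₁ + if 0 ≤ x₁ + x₂ then t₁ else t₂) * (x₁ + x₂) := by
  split_ifs with h
  · exact mul_nonneg (by linarith [hx₁.1]) h
  · exact mul_nonneg_of_nonpos_of_nonpos (by linarith [hx₁.2]) (not_le.1 h).le

lemma measure_setOf_add_neg_and_pos_pos {Ω : Type*} [MeasurableSpace Ω] {μ : Measure Ω}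
    {X₁ X₂ X₃ : Ω → ℝ} (hX₁ : Measurable X₁) (hX₂ : Measurable X₂) (h : IndepFun X₁ X₂ μ)
    (hlaw₁ : μ.map X₁ = uniformOnIoo (-1) 1) (hlaw₂ : μ.map X₂ = uniformOnIoo (-1) 1)
    (hX₃ : ∀ᵐ ω ∂μ, X₁ ω + X₂ ω < 0 → X₃ ω < -1) :
    0 < μ {ω | X₁ ω + X₃ ω < 0 ∧ 0 < X₁ ω} := by
  have hA : 0 < μ (X₁ ⁻¹' Ioo 0 (1 / 2) ∩ X₂ ⁻¹' Ioo (-1) (-1 / 2)) := by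
    rw [h.measure_inter_preimage_eq_mul _ _ measurableSet_Ioo measurableSet_Ioo,
      ← Measure.map_apply hX₁ measurableSet_Ioo, ← Measure.map_apply hX₂ measurableSet_Ioo,
      hlaw₁, hlaw₂]
    exact ENNReal.mul_pos (uniformOnIoo_Ioo_pos (by norm_num) (by norm_num) (by norm_num)).ne'
      (uniformOnIoo_Ioo_pos (by norm_num) (by norm_num) (by norm_num)).ne'
  refine hA.trans_le (measure_mono_ae ?_)
  filter_upwards [hX₃] with ω hω ⟨⟨h₁, h₁'⟩, h₂, h₂'⟩
  exact ⟨by linarith [hω (by linarith)], h₁⟩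

theorem counterexample_theta_underbar_proper_general {Ω : Type*} [MeasurableSpace Ω]
    (μ : Measure Ω) [IsProbabilityMeasure μ]
    (τ c : ℝ) (hc : c ∈ Ioo (0:ℝ) (min τ (1 - τ)))
    (X1 X2 T1 T2 ξ : Ω → ℝ)
    (hX1 : Measurable X1) (hX2 : Measurable X2) (hT1 : Measurable T1)
    (hT2 : Measurable T2) (hξ : Measurable ξ)
    (hlawX1 : μ.map X1 = uniformOnIoo (-1) 1)
    (hlawX2 : μ.map X2 = uniformOnIoo (-1) 1)
    (hlawT1 : μ.map T1 = uniformOnIoo 1 2)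
    (hlawT2 : μ.map T2 = uniformOnIoo (-2) (-1))
    (hindep : iIndepFun
      ![X1, X2, T1, T2, ξ] μ)
    -- X₃ = T₁ if X₁+X₂ ≥ 0 and X₃ = T₂ if X₁+X₂ < 0
    (X3 : Ω → ℝ)
    (hX3 : ∀ ω, X3 ω = if 0 ≤ X1 ω + X2 ω then T1 ω else T2 ω)
    -- F_ξ is the cdf of ξ: continuous, strictly increasing, equal to τ + ct on (−1,1]
    (Fξ : ℝ → ℝ)
    (hcdf : ∀ t, (μ {ω | ξ ω ≤ t}).toReal = Fξ t)
    (hFlin : ∀ t ∈ Ioc (-1:ℝ) 1, Fξ t = τ + c * t)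
    -- Y = 1{X'β ≥ ε} with β = (1,1,0) and ε = √(1+X₂²)·ξ
    (Y : Ω → ℝ)
    (hY : ∀ ω, Y ω =
      if Real.sqrt (1 + X2 ω ^ 2) * ξ ω ≤ X1 ω + X2 ω then 1 else 0) :
    -- b̃ = (1,0,1) ∈ Θ: (X'b̃)(X'β) ≥ 0 a.s.
    (∀ᵐ ω ∂μ, (X1 ω + X3 ω) * (X1 ω + X2 ω) ≥ 0) ∧
    -- the event {X'b̃ < 0 and X₁ > 0} has positive probability
    (0 < μ {ω | X1 ω + X3 ω < 0 ∧ 0 < X1 ω}) ∧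
    -- P(Y=1|X₁) ≥ τ on {X₁ ≥ 0} almost surely
    (∀ᵐ ω ∂μ, 0 ≤ X1 ω → τ ≤ condExpGiven μ X1 Y ω) ∧
    -- b̃ ∉ Θ̲: X'b̃·[P(Y=1|X'γ) − τ] < 0 with positive probability for γ = (1,0,0)
    ¬ (∀ᵐ ω ∂μ, (X1 ω + X3 ω) * (condExpGiven μ X1 Y ω - τ) ≥ 0) := by
  have hc₀ : 0 < c := hc.1
  have hX1m := ae_mem_Ioo_of_map_eq_uniformOnIoo hX1 hlawX1
  have hT1m := ae_mem_Ioo_of_map_eq_uniformOnIoo hT1 hlawT1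
  have hT2m := ae_mem_Ioo_of_map_eq_uniformOnIoo hT2 hlawT2
  have hmeas : ∀ i, Measurable (![X1, X2, T1, T2, ξ] i) := fun i => by
    fin_cases i <;> assumption
  have : IsProbabilityMeasure (μ.map ξ) := Measure.isProbabilityMeasure_map hξ.aemeasurable
  have hF : ∀ t ∈ Ioc (-1 : ℝ) 1, cdf (μ.map ξ) t = τ + c * t := fun t ht => by
    rw [cdf_eq_real, map_measureReal_apply hξ measurableSet_Iic, ← hFlin t ht, ← hcdf t]; rfl
  have hce : condExpGiven μ X1 Y =ᵐ[μ] fun ω => responseProb (μ.map ξ) (X1 ω) :=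
    funext hY ▸ condExpGiven_response_ae_eq hX1 hX2 hξ
      (hindep.indepFun_prodMk hmeas 1 4 0 (by decide) (by decide)).symm
      (hindep.indepFun (by decide : (1 : Fin 5) ≠ 4)) hlawX2
  have hlow : ∀ᵐ ω ∂μ, 0 ≤ X1 ω → τ + c * X1 ω / 2 ≤ condExpGiven μ X1 Y ω := by
    filter_upwards [hce, hX1m] with ω hω hX1ω hpos
    exact hω ▸ le_responseProb hc₀.le hF hpos hX1ω.2
  have hE : 0 < μ {ω | X1 ω + X3 ω < 0 ∧ 0 < X1 ω} := by
    refine measure_setOf_add_neg_and_pos_pos hX1 hX2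
      (hindep.indepFun (by decide : (0 : Fin 5) ≠ 1)) hlawX1 hlawX2 ?_
    filter_upwards [hT2m] with ω hT2ω hneg
    rw [hX3, if_neg (not_le.2 hneg)]
    exact hT2ω.2
  refine ⟨?_, hE, ?_, fun hΘ => hE.ne' (measure_eq_zero_iff_ae_notMem.2 ?_)⟩
  · filter_upwards [hX1m, hT1m, hT2m] with ω hX1ω hT1ω hT2ω
    rw [hX3]
    exact add_ite_mul_nonneg hX1ω hT1ω.1 hT2ω.2
  · filter_upwards [hlow] with ω hω hpos
    nlinarith [hω hpos]
  · filter_upwards [hΘ, hlow] with ω hΘω hω ⟨hneg, hpos⟩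
    have hgap : 0 < condExpGiven μ X1 Y ω - τ := by nlinarith [hω hpos.le]
    exact (mul_neg_of_neg_of_pos hneg hgap).not_ge hΘω

/-- In the three-covariate counterexample, `b̃ = (1,0,1)` belongs to `Θ`
(`X'b̃ = X₁+X₃` and `X'β = X₁+X₂` have the same sign a.s.) but `b̃ ∉ Θ̲`: taking
`γ = (1,0,0)` (so `X'γ = X₁`), the event `{X'b̃ < 0 and X₁ > 0}` has positive probability
while `P(Y=1|X₁=s) ≥ τ` for all `s ≥ 0`, so `X'b̃·[P(Y=1|X'γ) − τ] < 0` with positive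
probability. Hence `Θ̲` can be a proper subset of `Θ`. -/
theorem counterexample_theta_underbar_proper {Ω : Type*} [MeasurableSpace Ω]
    (μ : Measure Ω) [IsProbabilityMeasure μ]
    (τ c : ℝ) (hτ : τ ∈ Ioo (0:ℝ) 1) (hc : c ∈ Ioo (0:ℝ) (min τ (1 - τ)))
    (X1 X2 T1 T2 ξ : Ω → ℝ)
    (hX1 : Measurable X1) (hX2 : Measurable X2) (hT1 : Measurable T1)
    (hT2 : Measurable T2) (hξ : Measurable ξ)
    (hlawX1 : μ.map X1 = uniformOnIoo (-1) 1)
    (hlawX2 : μ.map X2 = uniformOnIoo (-1) 1)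
    (hlawT1 : μ.map T1 = uniformOnIoo 1 2)
    (hlawT2 : μ.map T2 = uniformOnIoo (-2) (-1))
    (hindep : iIndepFun
      ![X1, X2, T1, T2, ξ] μ)
    -- X₃ = T₁ if X₁+X₂ ≥ 0 and X₃ = T₂ if X₁+X₂ < 0
    (X3 : Ω → ℝ)
    (hX3 : ∀ ω, X3 ω = if 0 ≤ X1 ω + X2 ω then T1 ω else T2 ω)
    -- F_ξ is the cdf of ξ: continuous, strictly increasing, equal to τ + ct on (−1,1]
    (Fξ : ℝ → ℝ)
    (hcdf : ∀ t, (μ {ω | ξ ω ≤ t}).toReal = Fξ t)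
    (hFcont : Continuous Fξ) (hFmono : StrictMono Fξ)
    (hFlin : ∀ t ∈ Ioc (-1:ℝ) 1, Fξ t = τ + c * t)
    -- Y = 1{X'β ≥ ε} with β = (1,1,0) and ε = √(1+X₂²)·ξ
    (Y : Ω → ℝ)
    (hY : ∀ ω, Y ω =
      if Real.sqrt (1 + X2 ω ^ 2) * ξ ω ≤ X1 ω + X2 ω then 1 else 0) :
    -- b̃ = (1,0,1) ∈ Θ: (X'b̃)(X'β) ≥ 0 a.s.
    (∀ᵐ ω ∂μ, (X1 ω + X3 ω) * (X1 ω + X2 ω) ≥ 0) ∧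
    -- the event {X'b̃ < 0 and X₁ > 0} has positive probability
    (0 < μ {ω | X1 ω + X3 ω < 0 ∧ 0 < X1 ω}) ∧
    -- P(Y=1|X₁) ≥ τ on {X₁ ≥ 0} almost surely
    (∀ᵐ ω ∂μ, 0 ≤ X1 ω → τ ≤ condExpGiven μ X1 Y ω) ∧
    -- b̃ ∉ Θ̲: X'b̃·[P(Y=1|X'γ) − τ] < 0 with positive probability for γ = (1,0,0)
    ¬ (∀ᵐ ω ∂μ, (X1 ω + X3 ω) * (condExpGiven μ X1 Y ω - τ) ≥ 0) :=
  counterexample_theta_underbar_proper_general μ τ c hc X1 X2 T1 T2 ξ hX1 hX2 hT1 hT2 hξ hlawX1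
    hlawX2 hlawT1 hlawT2 hindep X3 hX3 Fξ hcdf hFlin Y hY
end

section
/- In the ordered choice panel data model with fixed effects, under the time-invariance condition on ε_t given (X,v), for any cutoff k ∈ {1,…,K} and periods s < t: sgn((X_t − X_s)'β) = sgn(E(1{Y_s ≤ k} − 1{Y_t ≤ k} | X)) almost surely. -/
open MeasureTheory Set

/-! Write `Z = (X, v)`, `a = λ_k - X_s'β - v` and `b = λ_k - X_t'β - v`, so that
`1{Y_s ≤ k} = 1{ε_s ≤ a}`, `1{Y_t ≤ k} = 1{ε_t ≤ b}` and `a - b = (X_t - X_s)'β`.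
Since `ε_s` and `ε_t` have the same conditional cdf given `Z`, the pairs `(Z, ε_s)` and
`(Z, ε_t)` have the same law, and as `a` is a function of `Z` we may replace `ε_s` by `ε_t`.
Given `Z`, `1{ε_t ≤ a} - 1{ε_t ≤ b}` then has conditional expectation of the sign of `a - b`:
where `b < p < q < a` for rationals `p, q`, it is at least `F(q) - F(p) > 0`.
Conditioning further on `X` keeps this sign, because `a - b` is a function of `X`. -/

open ProbabilityTheory

lemma Real.sign_eq_one_iff {r : ℝ} : Real.sign r = 1 ↔ 0 < r := by
  refine ⟨fun h => ?_, Real.sign_of_pos⟩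
  rcases lt_trichotomy r 0 with hr | rfl | hr
  · rw [Real.sign_of_neg hr] at h; norm_num at h
  · rw [Real.sign_zero] at h; norm_num at h
  · exact hr

lemma Real.sign_eq_neg_one_iff {r : ℝ} : Real.sign r = -1 ↔ r < 0 := by
  rw [← neg_inj, ← Real.sign_neg, neg_neg, Real.sign_eq_one_iff, neg_pos]

section

variable {Ω : Type*} {m m0 : MeasurableSpace Ω} {μ : Measure Ω} {S : Set Ω} {f g : Ω → ℝ}

lemma integrable_ite_le [IsFiniteMeasure μ] {e c : Ω → ℝ} (he : Measurable e)
    (hc : Measurable c) : Integrable (fun ω => if e ω ≤ c ω then (1 : ℝ) else 0) μ :=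
  (integrable_const 1).mono' (measurable_const.ite (measurableSet_le he hc)
    measurable_const).aestronglyMeasurable (.of_forall fun ω => by split_ifs <;> simp)

lemma ae_pos_condExp_of_ae_pos [IsFiniteMeasure μ] (hm : m ≤ m0) (hS : MeasurableSet[m] S)
    (hf : Integrable f μ) (hpos : ∀ᵐ ω ∂μ, ω ∈ S → 0 < f ω) :
    ∀ᵐ ω ∂μ, ω ∈ S → 0 < μ[f|m] ω := by
  set B := S ∩ {ω | μ[f|m] ω ≤ 0}
  have hB : MeasurableSet[m] B :=
    hS.inter (measurableSet_le stronglyMeasurable_condExp.measurable measurable_const)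
  have hfB : ∀ᵐ ω ∂μ.restrict B, 0 < f ω :=
    (ae_restrict_iff' (hm _ hB)).2 (hpos.mono fun ω h hω => h hω.1)
  have hint : ∫ ω in B, f ω ∂μ = 0 := by
    refine le_antisymm ?_ (setIntegral_nonneg_of_ae_restrict (hfB.mono fun _ h => h.le))
    rw [← setIntegral_condExp hm hf hB]
    exact setIntegral_nonpos (hm _ hB) fun ω hω => hω.2
  have hzero : f =ᵐ[μ.restrict B] 0 :=
    (setIntegral_eq_zero_iff_of_nonneg_ae (hfB.mono fun _ h => h.le) hf.integrableOn).1 hint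
  have hB0 : μ B = 0 := by
    rw [← Measure.restrict_eq_zero, ← ae_eq_bot, ← Filter.eventually_false_iff_eq_bot]
    filter_upwards [hfB, hzero] with ω h1 h2
    simp [h2] at h1
  filter_upwards [measure_eq_zero_iff_ae_notMem.1 hB0] with ω hωB hωS
  exact not_le.1 fun h => hωB ⟨hωS, h⟩

lemma ae_condExp_le_condExp_of_ae_le (hm : m ≤ m0) (hS : MeasurableSet[m] S)
    (hf : Integrable f μ) (hg : Integrable g μ) (hfg : ∀ᵐ ω ∂μ, ω ∈ S → f ω ≤ g ω) :
    ∀ᵐ ω ∂μ, ω ∈ S → μ[f|m] ω ≤ μ[g|m] ω := by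
  have hmono : μ[S.indicator f|m] ≤ᵐ[μ] μ[S.indicator g|m] := by
    refine condExp_mono (hf.indicator (hm _ hS)) (hg.indicator (hm _ hS)) ?_
    filter_upwards [hfg] with ω h
    by_cases hω : ω ∈ S <;> simp [hω, h]
  filter_upwards [hmono, condExp_indicator hf hS, condExp_indicator hg hS] with ω h hf' hg' hω
  simpa [hf', hg', hω] using h

lemma ae_pos_condExp_ite_le_sub_ite_le [IsFiniteMeasure μ] (hm : m ≤ m0) {e a b : Ω → ℝ}
    (he : Measurable e) (ha : Measurable[m] a) (hb : Measurable[m] b)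
    {G : Ω → ℝ → ℝ} (hG : ∀ ω, StrictMono (G ω))
    (hcdf : ∀ r, μ[fun ω => if e ω ≤ r then (1 : ℝ) else 0|m] =ᵐ[μ] fun ω => G ω r) :
    ∀ᵐ ω ∂μ, b ω < a ω →
      0 < μ[fun ω => (if e ω ≤ a ω then (1 : ℝ) else 0) - (if e ω ≤ b ω then 1 else 0)|m] ω := by
  have hbracket : ∀ p q : ℚ, ∀ᵐ ω ∂μ, ω ∈ {ω | b ω < p ∧ q < a ω} → G ω q - G ω p ≤
      μ[fun ω => (if e ω ≤ a ω then (1 : ℝ) else 0) - (if e ω ≤ b ω then 1 else 0)|m] ω := by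
    intro p q
    have hS : MeasurableSet[m] {ω | b ω < p ∧ q < a ω} :=
      (hb measurableSet_Iio).inter (ha measurableSet_Ioi)
    have hle := ae_condExp_le_condExp_of_ae_le hm hS
      (f := (fun ω => if e ω ≤ q then (1 : ℝ) else 0) - fun ω => if e ω ≤ p then 1 else 0)
      (g := fun ω => (if e ω ≤ a ω then (1 : ℝ) else 0) - (if e ω ≤ b ω then 1 else 0))
      ((integrable_ite_le he measurable_const).sub (integrable_ite_le he measurable_const))
      ((integrable_ite_le he (ha.mono hm le_rfl)).sub (integrable_ite_le he (hb.mono hm le_rfl)))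
      (ae_of_all μ fun ω (hω : b ω < p ∧ q < a ω) => by
        simp only [Pi.sub_apply]
        split_ifs <;> linarith [hω.1, hω.2])
    filter_upwards [hle, condExp_sub (m := m) (integrable_ite_le he measurable_const
      (c := fun _ => q)) (integrable_ite_le he measurable_const (c := fun _ => p)), hcdf q, hcdf p]
      with ω hω hsub hq hp hωS
    rw [← hq, ← hp, ← Pi.sub_apply, ← hsub]
    exact hω hωS
  filter_upwards [ae_all_iff.2 fun pq : ℚ × ℚ => hbracket pq.1 pq.2] with ω hω hba
  obtain ⟨p, hbp, hpa⟩ := exists_rat_btwn hba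
  obtain ⟨q, hpq, hqa⟩ := exists_rat_btwn hpa
  linarith [hω (p, q) ⟨hbp, hqa⟩, hG ω hpq]

lemma ae_sign_condExp_eq_of_ae_sign_eq [IsFiniteMeasure μ] (hm : m ≤ m0) {Δ : Ω → ℝ}
    (hΔ : Measurable[m] Δ) (hf : Integrable f μ)
    (hsign : ∀ᵐ ω ∂μ, Real.sign (f ω) = Real.sign (Δ ω)) :
    ∀ᵐ ω ∂μ, Real.sign (μ[f|m] ω) = Real.sign (Δ ω) := by
  have hpos := ae_pos_condExp_of_ae_pos hm (hΔ measurableSet_Ioi) hf <|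
    hsign.mono fun ω h (hω : 0 < Δ ω) => Real.sign_eq_one_iff.1 (h.trans (Real.sign_of_pos hω))
  have hneg := ae_pos_condExp_of_ae_pos hm (hΔ measurableSet_Iio) hf.neg <|
    hsign.mono fun ω h (hω : Δ ω < 0) =>
      neg_pos.2 (Real.sign_eq_neg_one_iff.1 (h.trans (Real.sign_of_neg hω)))
  have hΔ0 : MeasurableSet[m] {ω | Δ ω = 0} := hΔ (measurableSet_singleton 0)
  have hzero : μ[f|m] =ᵐ[μ.restrict {ω | Δ ω = 0}] 0 := by
    refine condExp_ae_eq_restrict_zero hΔ0 ((ae_restrict_iff' (hm _ hΔ0)).2 ?_)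
    filter_upwards [hsign] with ω h (hω : Δ ω = 0)
    rwa [hω, Real.sign_zero, Real.sign_eq_zero_iff] at h
  filter_upwards [hpos, hneg, condExp_neg f m, (ae_restrict_iff' (hm _ hΔ0)).1 hzero]
    with ω hp hn hcneg hz
  rcases lt_trichotomy (Δ ω) 0 with h | h | h
  · rw [Real.sign_of_neg h, Real.sign_of_neg (by simpa [hcneg] using hn h)]
  · rw [h, hz h, Pi.zero_apply]
  · rw [Real.sign_of_pos h, Real.sign_of_pos (hp h)]

lemma ae_sign_condExp_ite_le_sub_ite_le [IsFiniteMeasure μ] (hm : m ≤ m0) {e a b : Ω → ℝ}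
    (he : Measurable e) (ha : Measurable[m] a) (hb : Measurable[m] b)
    {G : Ω → ℝ → ℝ} (hG : ∀ ω, StrictMono (G ω))
    (hcdf : ∀ r, μ[fun ω => if e ω ≤ r then (1 : ℝ) else 0|m] =ᵐ[μ] fun ω => G ω r) :
    ∀ᵐ ω ∂μ, Real.sign (μ[fun ω => (if e ω ≤ a ω then (1 : ℝ) else 0) -
      (if e ω ≤ b ω then 1 else 0)|m] ω) = Real.sign (a ω - b ω) := by
  have hswap : (fun ω => (if e ω ≤ b ω then (1 : ℝ) else 0) - (if e ω ≤ a ω then 1 else 0)) =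
      -fun ω => (if e ω ≤ a ω then (1 : ℝ) else 0) - (if e ω ≤ b ω then 1 else 0) := by
    ext ω; simp
  have hab : MeasurableSet[m] {ω | a ω = b ω} := measurableSet_eq_fun ha hb
  have hzero : μ[fun ω => (if e ω ≤ a ω then (1 : ℝ) else 0) - (if e ω ≤ b ω then 1 else 0)|m]
      =ᵐ[μ.restrict {ω | a ω = b ω}] 0 := by
    refine condExp_ae_eq_restrict_zero hab ((ae_restrict_iff' (hm _ hab)).2 (ae_of_all _ ?_))
    intro ω (hω : a ω = b ω)
    simp [hω]
  filter_upwards [ae_pos_condExp_ite_le_sub_ite_le hm he ha hb hG hcdf,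
    ae_pos_condExp_ite_le_sub_ite_le hm he hb ha hG hcdf, condExp_neg (m := m) (μ := μ)
      (fun ω => (if e ω ≤ a ω then (1 : ℝ) else 0) - (if e ω ≤ b ω then 1 else 0)),
    (ae_restrict_iff' (hm _ hab)).1 hzero] with ω hp hn hcneg hz
  rw [hswap] at hn
  rcases lt_trichotomy (a ω - b ω) 0 with h | h | h
  · rw [Real.sign_of_neg h, Real.sign_of_neg (by simpa [hcneg] using hn (sub_neg.1 h))]
  · rw [h, hz (sub_eq_zero.1 h), Pi.zero_apply]
  · rw [Real.sign_of_pos h, Real.sign_of_pos (hp (sub_pos.1 h))]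

variable {𝓩 𝓔 : Type*} [MeasurableSpace 𝓩] [MeasurableSpace 𝓔] {Z : Ω → 𝓩}

lemma identDistrib_prod_of_condExp_ite_le_eq [IsFiniteMeasure μ] (hZ : Measurable Z)
    {e e' : Ω → ℝ} (he : Measurable e) (he' : Measurable e')
    (h : ∀ r, μ[fun ω => if e ω ≤ r then (1 : ℝ) else 0|MeasurableSpace.comap Z inferInstance]
      =ᵐ[μ] μ[fun ω => if e' ω ≤ r then (1 : ℝ) else 0|MeasurableSpace.comap Z inferInstance]) :
    IdentDistrib (fun ω => (Z ω, e ω)) (fun ω => (Z ω, e' ω)) μ μ := by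
  have hprob : ∀ {e : Ω → ℝ}, Measurable e → ∀ {B : Set 𝓩}, MeasurableSet B → ∀ r : ℝ,
      (μ.restrict (Z ⁻¹' B)).real (e ⁻¹' Iic r) = ∫ ω in Z ⁻¹' B,
        μ[fun ω => if e ω ≤ r then (1 : ℝ) else 0|MeasurableSpace.comap Z inferInstance] ω ∂μ := by
    intro e he B hB r
    rw [setIntegral_condExp hZ.comap_le (integrable_ite_le he measurable_const) ⟨B, hB, rfl⟩,
      ← integral_indicator_one (he measurableSet_Iic)]
    rfl
  refine ⟨(hZ.prodMk he).aemeasurable, (hZ.prodMk he').aemeasurable,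
    Measure.ext_prod fun {B t} hB ht => ?_⟩
  have hlaw : (μ.restrict (Z ⁻¹' B)).map e = (μ.restrict (Z ⁻¹' B)).map e' := by
    refine Measure.ext_of_Iic _ _ fun r => ?_
    rw [Measure.map_apply he measurableSet_Iic, Measure.map_apply he' measurableSet_Iic,
      ← measureReal_eq_measureReal_iff, hprob he hB, hprob he' hB]
    exact integral_congr_ae (ae_restrict_of_ae (h r))
  have := congrArg (· t) hlaw
  simp only [Measure.map_apply he ht, Measure.map_apply he' ht,
    Measure.restrict_apply (he ht), Measure.restrict_apply (he' ht)] at this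
  rw [Measure.map_apply (hZ.prodMk he) (hB.prod ht),
    Measure.map_apply (hZ.prodMk he') (hB.prod ht), mk_preimage_prod, mk_preimage_prod,
    inter_comm, this, inter_comm]

lemma ProbabilityTheory.IdentDistrib.condExp_comp_eq [IsFiniteMeasure μ] (hZ : Measurable Z)
    {e e' : Ω → 𝓔} (h : IdentDistrib (fun ω => (Z ω, e ω)) (fun ω => (Z ω, e' ω)) μ μ)
    {g : 𝓩 × 𝓔 → ℝ} (hg : Measurable g) (hgi : Integrable (fun ω => g (Z ω, e ω)) μ) :
    μ[fun ω => g (Z ω, e ω)|MeasurableSpace.comap Z inferInstance] =ᵐ[μ]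
      μ[fun ω => g (Z ω, e' ω)|MeasurableSpace.comap Z inferInstance] := by
  refine (ae_eq_condExp_of_forall_setIntegral_eq hZ.comap_le ((h.comp hg).integrable_iff.1 hgi)
    (fun _ _ _ => integrable_condExp.integrableOn) ?_
    stronglyMeasurable_condExp.aestronglyMeasurable)
  rintro _ ⟨B, hB, rfl⟩ -
  rw [setIntegral_condExp hZ.comap_le hgi ⟨B, hB, rfl⟩, ← integral_indicator (hZ hB),
    ← integral_indicator (hZ hB)]
  exact (h.comp (hg.indicator (measurable_fst hB))).integral_eq

theorem ae_sign_sub_eq_sign_condExp_of_common_condCdf [IsFiniteMeasure μ]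
    (hZ : Measurable Z) (hm : m ≤ MeasurableSpace.comap Z inferInstance)
    {es et : Ω → ℝ} (hes : Measurable es) (het : Measurable et)
    {G : Ω → ℝ → ℝ} (hG : ∀ ω, StrictMono (G ω))
    (hcdfs : ∀ r, μ[fun ω => if es ω ≤ r then (1 : ℝ) else 0|MeasurableSpace.comap Z inferInstance]
      =ᵐ[μ] fun ω => G ω r)
    (hcdft : ∀ r, μ[fun ω => if et ω ≤ r then (1 : ℝ) else 0|MeasurableSpace.comap Z inferInstance]
      =ᵐ[μ] fun ω => G ω r)
    {φs φt : 𝓩 → ℝ} (hφs : Measurable φs) (hφt : Measurable φt)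
    (hΔ : Measurable[m] fun ω => φs (Z ω) - φt (Z ω)) :
    ∀ᵐ ω ∂μ, Real.sign (φs (Z ω) - φt (Z ω)) = Real.sign (μ[fun ω =>
      (if es ω ≤ φs (Z ω) then (1 : ℝ) else 0) - (if et ω ≤ φt (Z ω) then 1 else 0)|m] ω) := by
  set mZ := MeasurableSpace.comap Z inferInstance
  have hmZ : mZ ≤ _ := hZ.comap_le
  have hφZ : ∀ {φ : 𝓩 → ℝ}, Measurable φ → Measurable[mZ] fun ω => φ (Z ω) :=
    fun hφ => hφ.comp (comap_measurable Z)
  have hsame : μ[fun ω => if es ω ≤ φs (Z ω) then (1 : ℝ) else 0|mZ] =ᵐ[μ]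
      μ[fun ω => if et ω ≤ φs (Z ω) then (1 : ℝ) else 0|mZ] :=
    (identDistrib_prod_of_condExp_ite_le_eq hZ hes het fun r => (hcdfs r).trans (hcdft r).symm)
      |>.condExp_comp_eq (μ := μ) hZ (g := fun p => if p.2 ≤ φs p.1 then 1 else 0)
        (measurable_const.ite (measurableSet_le measurable_snd (hφs.comp measurable_fst))
          measurable_const) (integrable_ite_le hes (hφs.comp hZ))
  set f := fun ω =>
    (if es ω ≤ φs (Z ω) then (1 : ℝ) else 0) - (if et ω ≤ φt (Z ω) then 1 else 0)
  set f' := fun ω =>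
    (if et ω ≤ φs (Z ω) then (1 : ℝ) else 0) - (if et ω ≤ φt (Z ω) then 1 else 0)
  have hcond : μ[f|mZ] =ᵐ[μ] μ[f'|mZ] := by
    filter_upwards [condExp_sub (m := mZ) (integrable_ite_le hes (hφs.comp hZ))
        (integrable_ite_le het (hφt.comp hZ)),
      condExp_sub (m := mZ) (integrable_ite_le het (hφs.comp hZ))
        (integrable_ite_le het (hφt.comp hZ)), hsame] with ω h1 h2 h3
    exact h1.trans ((congrArg (· - _) h3).trans h2.symm)
  filter_upwards [(condExp_condExp_of_le (f := f) hm hmZ).symm.trans (condExp_congr_ae hcond),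
    ae_sign_condExp_eq_of_ae_sign_eq (hm.trans hmZ) hΔ integrable_condExp
      (ae_sign_condExp_ite_le_sub_ite_le hmZ het (hφZ hφs) (hφZ hφt) hG hcdft)]
    with ω htower hsign
  rw [htower, hsign]

end

theorem panel_ordered_sign_equivalence_general {q T K : ℕ} {Ω : Type*} [MeasurableSpace Ω]
    (μ : Measure Ω) [IsProbabilityMeasure μ]
    (X : Ω → Fin T → Fin q → ℝ) (hX : Measurable X)
    (v : Ω → ℝ) (hv : Measurable v)
    (ε : Fin T → Ω → ℝ) (hε : ∀ t, Measurable (ε t))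
    (β : Fin q → ℝ)
    -- threshold parameters λ₁ < … < λ_K
    (lam : ℕ → ℝ)
    -- the ordered outcomes, taking values in {1,…,K+1}
    (Y : Fin T → Ω → ℕ)
    -- 1{Y_t ≤ k} = 1{X_t'β + v + ε_t ≤ λ_k} for each cutoff k ∈ {1,…,K}
    (hY : ∀ (t : Fin T) (k : ℕ), 1 ≤ k → k ≤ K → ∀ ω,
      (Y t ω ≤ k ↔ (∑ i, X ω t i * β i) + v ω + ε t ω ≤ lam k))
    -- `F x w` is the common (time-invariant) cdf of `ε_t` conditional on `(X,v) = (x,w)`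
    (F : (Fin T → Fin q → ℝ) → ℝ → ℝ → ℝ)
    -- everywhere positive conditional density: F is strictly increasing
    (hFstrict : ∀ x w, StrictMono (F x w))
    -- conditional cdf identity, the same F for every period t (time invariance)
    (hcdf : ∀ (t : Fin T) (r : ℝ),
      condExpGiven μ (fun ω => (X ω, v ω)) (fun ω => if ε t ω ≤ r then 1 else 0)
        =ᵐ[μ] fun ω => F (X ω) (v ω) r) :
    ∀ (k : ℕ), 1 ≤ k → k ≤ K → ∀ s t : Fin T, s < t →
      ∀ᵐ ω ∂μ,
        Real.sign (∑ i, (X ω t i - X ω s i) * β i) =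
          Real.sign (condExpGiven μ X
            (fun ω' => (if Y s ω' ≤ k then (1:ℝ) else 0) -
              (if Y t ω' ≤ k then (1:ℝ) else 0)) ω) := by
  intro k hk1 hkK s t _
  set Z := fun ω => (X ω, v ω)
  set φ : Fin T → (Fin T → Fin q → ℝ) × ℝ → ℝ := fun u z => lam k - ∑ i, z.1 u i * β i - z.2
  have hφ : ∀ u, Measurable (φ u) := fun u => by fun_prop
  have hΔ : ∀ ω, ∑ i, (X ω t i - X ω s i) * β i = φ s (Z ω) - φ t (Z ω) := fun ω => by
    simp only [φ, Z, sub_mul, Finset.sum_sub_distrib]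
    ring
  have hY' : ∀ u ω, Y u ω ≤ k ↔ ε u ω ≤ φ u (Z ω) := fun u ω => by
    rw [hY u k hk1 hkK ω]
    constructor <;> intro <;> linarith
  have hXZ : MeasurableSpace.comap X inferInstance ≤ MeasurableSpace.comap Z inferInstance :=
    (measurable_fst.comp (comap_measurable Z)).comap_le
  have hΔX : Measurable[MeasurableSpace.comap X inferInstance]
      fun ω => φ s (Z ω) - φ t (Z ω) := by
    simp_rw [← hΔ]
    exact (by fun_prop : Measurable fun x : Fin T → Fin q → ℝ => ∑ i, (x t i - x s i) * β i).comp
      (comap_measurable X)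
  filter_upwards [ae_sign_sub_eq_sign_condExp_of_common_condCdf (hX.prodMk hv) hXZ (hε s)
    (hε t) (fun ω => hFstrict (X ω) (v ω)) (hcdf s) (hcdf t) (hφ s) (hφ t) hΔX] with ω hω
  simpa only [condExpGiven, hΔ, hY'] using hω

/-- In the ordered choice panel data model with fixed effects
`Y_t = Σ_j j·1{λ_{j−1} < X_t'β + v + ε_t ≤ λ_j}`, under the time-invariance condition on
`ε_t` given `(X,v)` (common strictly increasing conditional cdf `F`), for any cutoff
`k ∈ {1,…,K}` and periods `s < t`:
`sgn((X_t − X_s)'β) = sgn(E(1{Y_s ≤ k} − 1{Y_t ≤ k} | X))` almost surely.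
(The key model implication `1{Y_t ≤ k} = 1{X_t'β + v + ε_t ≤ λ_k}` is hypothesis `hY`.) -/
theorem panel_ordered_sign_equivalence {q T K : ℕ} {Ω : Type*} [MeasurableSpace Ω]
    (μ : Measure Ω) [IsProbabilityMeasure μ]
    (X : Ω → Fin T → Fin q → ℝ) (hX : Measurable X)
    (v : Ω → ℝ) (hv : Measurable v)
    (ε : Fin T → Ω → ℝ) (hε : ∀ t, Measurable (ε t))
    (β : Fin q → ℝ)
    -- threshold parameters λ₁ < … < λ_K
    (lam : ℕ → ℝ) (hlam : StrictMonoOn lam (Icc 1 K))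
    -- the ordered outcomes, taking values in {1,…,K+1}
    (Y : Fin T → Ω → ℕ)
    (hYrange : ∀ t ω, Y t ω ∈ Icc 1 (K + 1))
    -- 1{Y_t ≤ k} = 1{X_t'β + v + ε_t ≤ λ_k} for each cutoff k ∈ {1,…,K}
    (hY : ∀ (t : Fin T) (k : ℕ), 1 ≤ k → k ≤ K → ∀ ω,
      (Y t ω ≤ k ↔ (∑ i, X ω t i * β i) + v ω + ε t ω ≤ lam k))
    -- `F x w` is the common (time-invariant) cdf of `ε_t` conditional on `(X,v) = (x,w)`
    (F : (Fin T → Fin q → ℝ) → ℝ → ℝ → ℝ)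
    -- everywhere positive conditional density: F is strictly increasing
    (hFstrict : ∀ x w, StrictMono (F x w))
    -- conditional cdf identity, the same F for every period t (time invariance)
    (hcdf : ∀ (t : Fin T) (r : ℝ),
      condExpGiven μ (fun ω => (X ω, v ω)) (fun ω => if ε t ω ≤ r then 1 else 0)
        =ᵐ[μ] fun ω => F (X ω) (v ω) r) :
    ∀ (k : ℕ), 1 ≤ k → k ≤ K → ∀ s t : Fin T, s < t →
      ∀ᵐ ω ∂μ,
        Real.sign (∑ i, (X ω t i - X ω s i) * β i) =
          Real.sign (condExpGiven μ X
            (fun ω' => (if Y s ω' ≤ k then (1:ℝ) else 0) -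
              (if Y t ω' ≤ k then (1:ℝ) else 0)) ω) :=
  panel_ordered_sign_equivalence_general μ X hX v hv ε hε β lam Y hY F hFstrict hcdf
end
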